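/- arXiv:1807.01486 — 2 statements merged into one kernel-verified Lean document; each statement's English description precedes it below -/
import Mathlib

section
/- For the Exponentiated Quadratic kernel k(x, x′) = exp(−‖x − x′‖²/(2ℓ²)) and X ~ N(μ, Σ) on ℝ^d with Σ diagonal with entries s_i², the expectation E[k(X, z)] equals ∏ᵢ (ℓ/√(ℓ² + s_i²)) · exp(−(μ_i − z_i)²/(2(ℓ² + s_i²))). -/
/-!
Both the kernel and the diagonal Gaussian factor over coordinates, so by Fubini the expectation
is a product of one-dimensional integrals. In dimension one, completing the square writes the
product of the Gaussian density with variance `v` and the kernel `exp (-(x - z)² / (2w))` as a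
constant times an unnormalized Gaussian in `x`, whose integral is known.
-/

open MeasureTheory ProbabilityTheory Real
open scoped NNReal

lemma neg_sq_div_add_neg_sq_div {v w : ℝ} (hv : v ≠ 0) (hw : w ≠ 0) (hwv : w + v ≠ 0)
    (x m z : ℝ) :
    -(x - m) ^ 2 / (2 * v) + -(x - z) ^ 2 / (2 * w) =
      -(m - z) ^ 2 / (2 * (w + v)) +
        -((w + v) / (2 * v * w)) * (x - (w * m + v * z) / (w + v)) ^ 2 := by
  field_simp
  ring

lemma integral_gaussianPDFReal_mul_exp_neg_sq_div {v : ℝ≥0} (hv : v ≠ 0) {w : ℝ} (hw : 0 < w)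
    (m z : ℝ) :
    ∫ x, gaussianPDFReal m v x * exp (-(x - z) ^ 2 / (2 * w)) =
      √(w / (w + v)) * exp (-(m - z) ^ 2 / (2 * (w + v))) := by
  have hv₀ : (0 : ℝ) < v := by positivity
  set a := (w + v) / (2 * v * w) with ha
  set c := (w * m + v * z) / (w + v)
  have hsplit (x : ℝ) : gaussianPDFReal m v x * exp (-(x - z) ^ 2 / (2 * w)) =
      (√(2 * π * v))⁻¹ * exp (-(m - z) ^ 2 / (2 * (w + v))) * exp (-a * (x - c) ^ 2) := by
    rw [gaussianPDFReal, mul_assoc, ← exp_add,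
      neg_sq_div_add_neg_sq_div hv₀.ne' hw.ne' (by positivity), exp_add]
    ring
  have hπa : π / a = 2 * π * v * (w / (w + v)) := by
    rw [ha]
    field_simp
  simp_rw [hsplit]
  rw [integral_const_mul, integral_sub_right_eq_self (fun x ↦ exp (-a * x ^ 2)) c,
    integral_gaussian, hπa, sqrt_mul (by positivity) (w / (w + v))]
  field_simp

lemma integral_exp_neg_sq_div_gaussianReal {w : ℝ} (hw : 0 < w) (m : ℝ) (v : ℝ≥0) (z : ℝ) :
    ∫ x, exp (-(x - z) ^ 2 / (2 * w)) ∂gaussianReal m v =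
      √(w / (w + v)) * exp (-(m - z) ^ 2 / (2 * (w + v))) := by
  rcases eq_or_ne v 0 with rfl | hv
  · simp [div_self hw.ne']
  · rw [integral_gaussianReal_eq_integral_smul hv]
    exact integral_gaussianPDFReal_mul_exp_neg_sq_div hv hw m z

lemma exp_neg_sum_sq_div {ι : Type*} (t : Finset ι) (f : ι → ℝ) (c : ℝ) :
    exp (-(∑ i ∈ t, f i ^ 2) / c) = ∏ i ∈ t, exp (-f i ^ 2 / c) := by
  rw [← exp_sum, ← Finset.sum_div, Finset.sum_neg_distrib]

theorem eq_kernel_gaussian_expectation {d : ℕ} (ℓ : ℝ) (hℓ : 0 < ℓ)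
    (μ s : Fin d → ℝ) (z : Fin d → ℝ) :
    ∫ x : Fin d → ℝ,
        Real.exp (-(∑ i, (x i - z i) ^ 2) / (2 * ℓ ^ 2))
        ∂(Measure.pi fun i => gaussianReal (μ i) (Real.toNNReal (s i ^ 2))) =
      ∏ i, (ℓ / Real.sqrt (ℓ ^ 2 + s i ^ 2)) *
        Real.exp (-(μ i - z i) ^ 2 / (2 * (ℓ ^ 2 + s i ^ 2))) := by
  simp_rw [exp_neg_sum_sq_div]
  rw [integral_fintype_prod_eq_prod (fun i x ↦ exp (-(x - z i) ^ 2 / (2 * ℓ ^ 2)))]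
  refine Finset.prod_congr rfl fun i _ ↦ ?_
  rw [integral_exp_neg_sq_div_gaussianReal (by positivity), coe_toNNReal _ (sq_nonneg _),
    sqrt_div (sq_nonneg ℓ), sqrt_sq hℓ.le]
end

section
/- If k : ℝ^d × ℝ^d → ℝ is a C² positive semidefinite kernel, then the derivative kernel k^{∂}(x, x′) = ∂²k/∂x_i∂x′_i (for a fixed coordinate i) is itself a positive semidefinite kernel. -/
/-!
If `k` is the kernel of a feature map `φ`, then
`k(x + 2he, y + 2he) - k(x + 2he, y + he) - k(x + he, y + 2he) + k(x + he, y + he)`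
is the kernel of `x ↦ φ(x + 2he) - φ(x + he)`, hence positive semidefinite, and so is its
quotient by `h²`. As `h → 0⁺` this second difference quotient tends to `∂²k/∂x_i∂y_i`, and
positive semidefiniteness survives pointwise limits.
-/

open Filter Topology Finset

def IsPosSemidefKernel {X : Type*} (K : X → X → ℝ) : Prop :=
  ∀ (n : ℕ) (pts : Fin n → X) (c : Fin n → ℝ), 0 ≤ ∑ a, ∑ b, c a * c b * K (pts a) (pts b)

namespace IsPosSemidefKernel

variable {X Y : Type*} {K : X → X → ℝ}

theorem const_mul (hK : IsPosSemidefKernel K) {r : ℝ} (hr : 0 ≤ r) :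
    IsPosSemidefKernel fun x y => r * K x y := by
  intro n pts c
  have h := mul_nonneg hr (hK n pts c)
  simpa only [mul_sum, mul_left_comm r] using h

theorem comp_sub_comp (hK : IsPosSemidefKernel K) (σ τ : Y → X) :
    IsPosSemidefKernel fun x y =>
      K (σ x) (σ y) - K (σ x) (τ y) - K (τ x) (σ y) + K (τ x) (τ y) := by
  intro n pts c
  have h := hK (n + n) (Fin.append (σ ∘ pts) (τ ∘ pts)) (Fin.append c (-c))
  simp only [Fin.sum_univ_add, Fin.append_left, Fin.append_right] at h
  refine h.trans_eq ?_
  simp only [← sum_add_distrib]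
  refine sum_congr rfl fun a _ => sum_congr rfl fun b _ => ?_
  simp only [Function.comp_apply, Pi.neg_apply]
  ring

theorem of_tendsto {ι : Type*} {l : Filter ι} [l.NeBot] {F : ι → X → X → ℝ}
    (hF : ∀ᶠ t in l, IsPosSemidefKernel (F t))
    (hlim : ∀ x y, Tendsto (fun t => F t x y) l (𝓝 (K x y))) :
    IsPosSemidefKernel K := by
  intro n pts c
  have hsum : Tendsto (fun t => ∑ a, ∑ b, c a * c b * F t (pts a) (pts b)) l
      (𝓝 (∑ a, ∑ b, c a * c b * K (pts a) (pts b))) :=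
    tendsto_finsetSum _ fun a _ => tendsto_finsetSum _ fun b _ =>
      (hlim (pts a) (pts b)).const_mul _
  exact ge_of_tendsto hsum (hF.mono fun t ht => ht n pts c)

end IsPosSemidefKernel

section Calculus

variable {E F G : Type*} [NormedAddCommGroup E] [NormedSpace ℝ E] [NormedAddCommGroup F]
  [NormedSpace ℝ F] [NormedAddCommGroup G] [NormedSpace ℝ G]

open ContinuousLinearMap in
theorem fderiv_fderiv_curry_eq_fderiv_fderiv_uncurry {k : E → F → G}
    (hk : ContDiff ℝ 2 (Function.uncurry k)) (x : E) (y : F) (u : E) (v : F) :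
    fderiv ℝ (fun a => fderiv ℝ (k a) y v) x u
      = fderiv ℝ (fderiv ℝ (Function.uncurry k)) (x, y) (u, 0) (0, v) := by
  set f := Function.uncurry k
  have hf : Differentiable ℝ f := hk.differentiable (by norm_num)
  have hf' : Differentiable ℝ (fderiv ℝ f) := (hk.fderiv_right le_rfl).differentiable one_ne_zero
  have hpartial : ∀ a, fderiv ℝ (k a) y v = fderiv ℝ f (a, y) (0, v) := fun a => by
    have := ((hf (a, y)).hasFDerivAt.comp y (hasFDerivAt_prodMk_right a y)).fderiv
    exact congrArg (· v) this
  have hline : HasFDerivAt (fun a => fderiv ℝ f (a, y) (0, v))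
      ((apply ℝ G ((0 : E), v)).comp ((fderiv ℝ (fderiv ℝ f) (x, y)).comp (inl ℝ E F))) x :=
    (apply ℝ G ((0 : E), v)).hasFDerivAt.comp x
      ((hf' (x, y)).hasFDerivAt.comp x (hasFDerivAt_prodMk_left x y))
  simp only [hpartial, hline.fderiv]
  rfl

/-- The quadrilateral is based at `(x + h • u, y + h • v)` rather than at `(x, y)` because that is
the form proved in `Convex.isLittleO_alternate_sum_square`. -/
theorem tendsto_secondDifferenceQuotient {k : E → F → G}
    (hk : ContDiff ℝ 2 (Function.uncurry k)) (x : E) (y : F) (u : E) (v : F) :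
    Tendsto (fun h : ℝ => (h ^ 2)⁻¹ • (k (x + (2 * h) • u) (y + (2 * h) • v)
        - k (x + (2 * h) • u) (y + h • v) - k (x + h • u) (y + (2 * h) • v)
        + k (x + h • u) (y + h • v)))
      (𝓝[>] 0) (𝓝 (fderiv ℝ (fderiv ℝ (Function.uncurry k)) (x, y) (u, 0) (0, v))) := by
  set f := Function.uncurry k
  have hf : Differentiable ℝ f := hk.differentiable (by norm_num)
  have hf' : Differentiable ℝ (fderiv ℝ f) := (hk.fderiv_right le_rfl).differentiable one_ne_zero
  have ho := convex_univ.isLittleO_alternate_sum_square (v := ((u, 0) : E × F)) (w := (0, v))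
    (fun z _ => (hf z).hasFDerivAt) (Set.mem_univ (x, y)) (hf' (x, y)).hasFDerivAt.hasFDerivWithinAt
    (by simp) (by simp)
  have hlim := (ho.tendsto_inv_smul_nhds_zero).add_const
    (fderiv ℝ (fderiv ℝ f) (x, y) (u, 0) (0, v))
  rw [zero_add] at hlim
  refine hlim.congr' ?_
  filter_upwards [self_mem_nhdsWithin] with h (hh : 0 < h)
  have h2u : (2 * h) • u = h • u + h • u := by module
  have h2v : (2 * h) • v = h • v + h • v := by module
  simp only [f, Prod.smul_mk, Prod.mk_add_mk, two_nsmul, smul_add, smul_zero, add_zero, zero_add,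
    Function.uncurry_apply_pair, h2u, h2v, smul_sub]
  rw [smul_smul, inv_mul_cancel₀ (by positivity), one_smul]
  abel

end Calculus

theorem derivative_kernel_posSemidef {d : ℕ}
    (k : (Fin d → ℝ) → (Fin d → ℝ) → ℝ)
    (hk : ContDiff ℝ 2 (Function.uncurry k))
    (hpsd : ∀ (n : ℕ) (pts : Fin n → (Fin d → ℝ)) (c : Fin n → ℝ),
      0 ≤ ∑ a, ∑ b, c a * c b * k (pts a) (pts b))
    (i : Fin d)
    (kD : (Fin d → ℝ) → (Fin d → ℝ) → ℝ)
    (hkD : kD = fun x y =>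
      fderiv ℝ (fun a => fderiv ℝ (fun b => k a b) y (Pi.single i 1)) x
        (Pi.single i 1)) :
    ∀ (n : ℕ) (pts : Fin n → (Fin d → ℝ)) (c : Fin n → ℝ),
      0 ≤ ∑ a, ∑ b, c a * c b * kD (pts a) (pts b) := by
  set e : Fin d → ℝ := Pi.single i 1
  have hquot : ∀ h : ℝ, IsPosSemidefKernel fun x y => (h ^ 2)⁻¹ *
      (k (x + (2 * h) • e) (y + (2 * h) • e) - k (x + (2 * h) • e) (y + h • e)
        - k (x + h • e) (y + (2 * h) • e) + k (x + h • e) (y + h • e)) := fun h =>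
    (IsPosSemidefKernel.comp_sub_comp hpsd _ _).const_mul (by positivity)
  refine IsPosSemidefKernel.of_tendsto (l := 𝓝[>] (0 : ℝ)) (.of_forall hquot) fun x y => ?_
  simpa only [hkD, fderiv_fderiv_curry_eq_fderiv_fderiv_uncurry hk, smul_eq_mul] using
    tendsto_secondDifferenceQuotient hk x y e e
end
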